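/- arXiv:1904.02664 — 2 statements merged into one kernel-verified Lean document; each statement's English description precedes it below -/
import Mathlib

section
/- Let $m > 0$, let $\gamma_* \in [0,1]$, and for each $\gamma \in [0,1]$ let $R_\gamma \in \mathbb{R}$ and $\sigma_\gamma > 0$ satisfy the gap condition: for all $a \le b \le \gamma_*$, $R_a - R_b \ge m \max\{\sigma_a, \sigma_b\}(b-a)$, and for all $\gamma_* \le a \le b$, $R_b - R_a \ge m \max\{\sigma_a, \sigma_b\}(b-a)$. Consider the randomized ternary search with $L$ steps and sample sizes $(s_\ell)_{\ell=1}^L$: $I_0 = 0$, $J_0 = 1$; at step $\ell$ set $a = (2 I_{\ell-1} + J_{\ell-1})/3$, $b = (I_{\ell-1} + 2 J_{\ell-1})/3$, let $\hat R_a$ and $\hat R_b$ be empirical means of $s_\ell$ fresh i.i.d. samples of random variables with means $R_a$, $R_b$ that are $\sigma_a^2$- and $\sigma_b^2$-sub-Gaussian about their means respectively, and set $(I_\ell, J_\ell) = (a, J_{\ell-1})$ if $\hat R_a \ge \hat R_b$ and $(I_\ell, J_\ell) = (I_{\ell-1}, b)$ otherwise. Then $\Pr(\gamma_* \notin [I_L,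 J_L]) \le 4 \sum_{\ell=1}^L \exp\left(- (2/3)^{2\ell} m^2 s_\ell / 72\right)$. -/
open MeasureTheory ProbabilityTheory

/-- A real random variable `X` with mean `μ` is `σ²`-sub-Gaussian (about its mean) if
`𝔼[exp(λ (X - μ))] ≤ exp(λ² σ² / 2)` for all `λ ∈ ℝ` (with the exponential moments
existing). -/
def IsSubGaussian {Ω : Type*} [MeasurableSpace Ω] (P : Measure Ω)
    (X : Ω → ℝ) (μ σ : ℝ) : Prop :=
  ∀ l : ℝ, Integrable (fun ω => Real.exp (l * (X ω - μ))) P ∧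
    ∫ ω, Real.exp (l * (X ω - μ)) ∂P ≤ Real.exp (l ^ 2 * σ ^ 2 / 2)

section helpers

variable {Ω : Type*} [MeasurableSpace Ω] {ι : Type*}

def tup (f : ι → Ω → ℝ) (S : Finset ι) : Ω → (S → ℝ) := fun ω q => f q ω

lemma meas_tup {f : ι → Ω → ℝ} (hf : ∀ i, Measurable (f i)) (S : Finset ι) :
    Measurable (tup f S) :=
  measurable_pi_lambda _ fun q => hf q

def salg (f : ι → Ω → ℝ) (S : Finset ι) : MeasurableSpace Ω :=
  MeasurableSpace.comap (tup f S) MeasurableSpace.pi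

lemma salg_le {f : ι → Ω → ℝ} (hf : ∀ i, Measurable (f i)) (S : Finset ι) :
    salg f S ≤ ‹MeasurableSpace Ω› :=
  (meas_tup hf S).comap_le

omit [MeasurableSpace Ω] in
lemma salg_mono (f : ι → Ω → ℝ) {S T : Finset ι} (h : S ⊆ T) :
    salg f S ≤ salg f T := by
  have he : tup f S = (fun v : T → ℝ => fun q : S => v ⟨q.1, h q.2⟩) ∘ tup f T := rfl
  rw [salg, he, ← MeasurableSpace.comap_comp]
  exact MeasurableSpace.comap_mono
    ((measurable_pi_lambda _ fun q => measurable_pi_apply _).comap_le)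

omit [MeasurableSpace Ω] in
lemma meas_coord (f : ι → Ω → ℝ) {S : Finset ι} {p : ι} (hp : p ∈ S) :
    Measurable[salg f S] (f p) := by
  have he : f p = (fun v : S → ℝ => v ⟨p, hp⟩) ∘ tup f S := rfl
  rw [he]
  exact (measurable_pi_apply _).comp (Measurable.of_comap_le le_rfl)

lemma indep_of_salg {f : ι → Ω → ℝ} (hf : ∀ i, Measurable (f i))
    {P : Measure Ω}
    (hindep : iIndepFun f P)
    {S T : Finset ι} (hST : Disjoint S T) {B D : Set Ω}
    (hB : MeasurableSet[salg f S] B) (hD : MeasurableSet[salg f T] D) :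
    P (B ∩ D) = P B * P D := by
  rcases MeasurableSpace.measurableSet_comap.mp hB with ⟨MB, hMB, rfl⟩
  rcases MeasurableSpace.measurableSet_comap.mp hD with ⟨MD, hMD, rfl⟩
  exact (hindep.indepFun_finset S T hST hf).measure_inter_preimage_eq_mul MB MD hMB hMD

lemma iIndepFun_precomp {β : Type*} {mβ : MeasurableSpace β} {κ : Type*}
    {P : Measure Ω} {f : ι → Ω → β}
    (h : iIndepFun f P) {g : κ → ι} (hg : Function.Injective g) :
    iIndepFun (fun k => f (g k)) P := by
  classical
  rw [iIndepFun_iff_measure_inter_preimage_eq_mul] at h ⊢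
  intro S sets hsets
  set sets' : ι → Set β := fun i =>
    if hi : ∃ k ∈ S, g k = i then sets hi.choose else Set.univ with hsets'
  have hkey : ∀ k ∈ S, sets' (g k) = sets k := by
    intro k hk
    have hi : ∃ k' ∈ S, g k' = g k := ⟨k, hk, rfl⟩
    have h2 := hi.choose_spec
    have : hi.choose = k := hg h2.2
    simp only [sets', dif_pos hi, this]
  have h1 : (⋂ k ∈ S, f (g k) ⁻¹' sets k) = ⋂ i ∈ S.image g, f i ⁻¹' sets' i := by
    rw [Finset.set_biInter_finset_image]
    exact Set.iInter₂_congr fun k hk => by rw [hkey k hk]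
  have h2 : (∏ k ∈ S, P (f (g k) ⁻¹' sets k)) = ∏ i ∈ S.image g, P (f i ⁻¹' sets' i) := by
    rw [Finset.prod_image (fun a _ b _ hab => hg hab)]
    exact Finset.prod_congr rfl fun k hk => by rw [hkey k hk]
  rw [h1, h2]
  refine h (S.image g) ?_
  intro i hi
  by_cases hex : ∃ k ∈ S, g k = i
  · have := hex.choose_spec
    simp only [sets', dif_pos hex]
    exact hsets _ this.1
  · simp only [sets', dif_neg hex]
    exact MeasurableSet.univ

lemma chernoff_tail (P : Measure Ω) [IsProbabilityMeasure P]
    (Y : ℕ → Ω → ℝ) (hmeas : ∀ k, Measurable (Y k))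
    (hindep : iIndepFun Y P)
    (σ : ℝ) (hσ : 0 < σ)
    (hsub : ∀ k (l : ℝ), Integrable (fun ω => Real.exp (l * Y k ω)) P ∧
      ∫ ω, Real.exp (l * Y k ω) ∂P ≤ Real.exp (l ^ 2 * σ ^ 2 / 2))
    (n : ℕ) (t : ℝ) (ht : 0 ≤ t) :
    P {ω | (n : ℝ) * t ≤ ∑ k ∈ Finset.range n, Y k ω} ≤
      ENNReal.ofReal (Real.exp (-(n : ℝ) * t ^ 2 / (2 * σ ^ 2))) := by
  set l : ℝ := t / σ ^ 2 with hl
  have hl0 : 0 ≤ l := div_nonneg ht (by positivity)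
  have hint : Integrable (fun ω => Real.exp (l * (∑ k ∈ Finset.range n, Y k) ω)) P :=
    hindep.integrable_exp_mul_sum hmeas fun k _ => (hsub k l).1
  have hmgf : mgf (∑ k ∈ Finset.range n, Y k) P l ≤ Real.exp ((n : ℝ) * (l ^ 2 * σ ^ 2 / 2)) := by
    rw [hindep.mgf_sum hmeas]
    calc ∏ k ∈ Finset.range n, mgf (Y k) P l
        ≤ ∏ _k ∈ Finset.range n, Real.exp (l ^ 2 * σ ^ 2 / 2) :=
          Finset.prod_le_prod (fun k _ => mgf_nonneg) fun k _ => (hsub k l).2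
      _ = Real.exp ((n : ℝ) * (l ^ 2 * σ ^ 2 / 2)) := by
          rw [Finset.prod_const, Finset.card_range, ← Real.exp_nat_mul]
  have hch := measure_ge_le_exp_mul_mgf (μ := P) (X := ∑ k ∈ Finset.range n, Y k)
    ((n : ℝ) * t) hl0 hint
  have hset : {ω | (n : ℝ) * t ≤ ∑ k ∈ Finset.range n, Y k ω}
      = {ω | (n : ℝ) * t ≤ (∑ k ∈ Finset.range n, Y k) ω} := by
    ext ω; simp [Finset.sum_apply]
  rw [ENNReal.le_ofReal_iff_toReal_le (measure_ne_top _ _) (Real.exp_nonneg _), hset]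
  calc (P {ω | (n : ℝ) * t ≤ (∑ k ∈ Finset.range n, Y k) ω}).toReal
      ≤ Real.exp (-l * ((n : ℝ) * t)) * mgf (∑ k ∈ Finset.range n, Y k) P l := hch
    _ ≤ Real.exp (-l * ((n : ℝ) * t)) * Real.exp ((n : ℝ) * (l ^ 2 * σ ^ 2 / 2)) :=
        mul_le_mul_of_nonneg_left hmgf (Real.exp_nonneg _)
    _ = Real.exp (-(n : ℝ) * t ^ 2 / (2 * σ ^ 2)) := by
        rw [← Real.exp_add]
        congr 1
        rw [hl]
        field_simp
        ring

end helpers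

noncomputable section griddefs
open Classical in
def tgrid : ℕ → Finset (ℝ × ℝ)
  | 0 => {((0 : ℝ), (1 : ℝ))}
  | (ℓ + 1) =>
      (tgrid ℓ).image (fun p => ((2 * p.1 + p.2) / 3, p.2)) ∪
      (tgrid ℓ).image (fun p => (p.1, (p.1 + 2 * p.2) / 3))

open Classical in
def tquery : ℕ → Finset ℝ
  | 0 => ∅
  | (ℓ + 1) =>
      (tgrid ℓ).image (fun p => (2 * p.1 + p.2) / 3) ∪
      (tgrid ℓ).image (fun p => (p.1 + 2 * p.2) / 3)

open Classical in
def tidx (s : ℕ → ℕ) (ℓ : ℕ) : Finset (ℕ × ℝ × ℕ) :=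
  (Finset.Icc 1 ℓ).biUnion fun t =>
    (tquery t).biUnion fun γ => (Finset.range (s t)).image fun k => (t, γ, k)

lemma tgrid_bounds : ∀ ℓ, ∀ p ∈ tgrid ℓ, 0 ≤ p.1 ∧ p.2 ≤ 1 ∧ p.2 - p.1 = (2 / 3 : ℝ) ^ ℓ := by
  intro ℓ
  induction ℓ with
  | zero => intro p hp; simp only [tgrid, Finset.mem_singleton] at hp; subst hp; norm_num
  | succ ℓ ih =>
    intro p hp
    simp only [tgrid, Finset.mem_union, Finset.mem_image] at hp
    rcases hp with ⟨q, hq, rfl⟩ | ⟨q, hq, rfl⟩ <;>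
      obtain ⟨h1, h2, h3⟩ := ih q hq
    · refine ⟨by nlinarith [pow_nonneg (by norm_num : (0:ℝ) ≤ 2/3) ℓ], h2, ?_⟩
      simp only
      rw [pow_succ]
      nlinarith
    · refine ⟨h1, ?_, ?_⟩
      · simp only
        nlinarith [pow_nonneg (by norm_num : (0:ℝ) ≤ 2/3) ℓ]
      · simp only
        rw [pow_succ]
        nlinarith

lemma tgrid_le (ℓ : ℕ) {p : ℝ × ℝ} (hp : p ∈ tgrid ℓ) : p.1 ≤ p.2 := by
  obtain ⟨_, _, h3⟩ := tgrid_bounds ℓ p hp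
  nlinarith [pow_nonneg (by norm_num : (0:ℝ) ≤ 2/3) ℓ]

lemma tquery_memA {ℓ : ℕ} {p : ℝ × ℝ} (hp : p ∈ tgrid ℓ) :
    (2 * p.1 + p.2) / 3 ∈ tquery (ℓ + 1) := by
  classical
  simp only [tquery, Finset.mem_union, Finset.mem_image]
  exact Or.inl ⟨p, hp, rfl⟩

lemma tquery_memB {ℓ : ℕ} {p : ℝ × ℝ} (hp : p ∈ tgrid ℓ) :
    (p.1 + 2 * p.2) / 3 ∈ tquery (ℓ + 1) := by
  classical
  simp only [tquery, Finset.mem_union, Finset.mem_image]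
  exact Or.inr ⟨p, hp, rfl⟩

lemma tidx_mem {s : ℕ → ℕ} {ℓ t : ℕ} (ht1 : 1 ≤ t) (ht2 : t ≤ ℓ) {γ : ℝ}
    (hγ : γ ∈ tquery t) {k : ℕ} (hk : k < s t) : (t, γ, k) ∈ tidx s ℓ := by
  classical
  simp only [tidx, Finset.mem_biUnion, Finset.mem_image]
  exact ⟨t, Finset.mem_Icc.mpr ⟨ht1, ht2⟩, γ, hγ, k, Finset.mem_range.mpr hk, rfl⟩

lemma tidx_fst {s : ℕ → ℕ} {ℓ : ℕ} {p : ℕ × ℝ × ℕ} (hp : p ∈ tidx s ℓ) : p.1 ≤ ℓ := by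
  classical
  simp only [tidx, Finset.mem_biUnion, Finset.mem_image] at hp
  obtain ⟨t, ht, γ, hγ, k, hk, rfl⟩ := hp
  exact (Finset.mem_Icc.mp ht).2

lemma tidx_mono {s : ℕ → ℕ} {ℓ ℓ' : ℕ} (h : ℓ ≤ ℓ') : tidx s ℓ ⊆ tidx s ℓ' := by
  classical
  intro p hp
  simp only [tidx, Finset.mem_biUnion] at hp ⊢
  obtain ⟨t, ht, rest⟩ := hp
  exact ⟨t, Finset.mem_Icc.mpr ⟨(Finset.mem_Icc.mp ht).1, (Finset.mem_Icc.mp ht).2.trans h⟩, rest⟩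

end griddefs

noncomputable def pA (p : ℝ × ℝ) : ℝ := (2 * p.1 + p.2) / 3
noncomputable def pB (p : ℝ × ℝ) : ℝ := (p.1 + 2 * p.2) / 3

def devP {Ω : Type*} (X : ℕ → ℝ → ℕ → Ω → ℝ) (R : ℝ → ℝ) (t n : ℕ) (γ u : ℝ) : Set Ω :=
  {ω | (n : ℝ) * u ≤ ∑ k ∈ Finset.range n, (X t γ k ω - R γ)}

def devM {Ω : Type*} (X : ℕ → ℝ → ℕ → Ω → ℝ) (R : ℝ → ℝ) (t n : ℕ) (γ u : ℝ) : Set Ω :=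
  {ω | (n : ℝ) * u ≤ ∑ k ∈ Finset.range n, (R γ - X t γ k ω)}

/-- **Lemma 2.** Consider the noisy ternary search on `[0,1]` driven by empirical-mean
estimates of a unimodal objective `R` with minimizer `γ⋆`, satisfying the
gap-versus-standard-deviation condition with constant `m > 0`. The samples are modelled
by a pre-sampled family `X ℓ γ k` (step `ℓ`, query point `γ`, sample index `k`): all
these random variables are mutually independent (so the `s ℓ` samples used at each step
are fresh and i.i.d.), and for `γ ∈ [0,1]` each `X ℓ γ k` has mean `R γ` and is
`(σ γ)²`-sub-Gaussian about its mean. At step `ℓ` the current interval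
`[I (ℓ-1), J (ℓ-1)]` is trisected at `a` and `b`, the empirical means `R̂_a`, `R̂_b` of
`s ℓ` fresh samples at `a` and `b` are compared, and one of the outer thirds is
eliminated (`(I ℓ, J ℓ) = (a, J (ℓ-1))` if `R̂_a ≥ R̂_b`, else
`(I ℓ, J ℓ) = (I (ℓ-1), b)`). Then the probability that `γ⋆` is eliminated after `L`
steps satisfies `Pr(γ⋆ ∉ [I L, J L]) ≤ 4 ∑_{ℓ=1}^L exp(-(2/3)^(2ℓ) m² s_ℓ / 72)`. -/
theorem ternary_ebrm_elimination_bound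
    {Ω : Type*} [MeasurableSpace Ω] (P : Measure Ω) [IsProbabilityMeasure P]
    (m : ℝ) (hm : 0 < m)
    (γstar : ℝ) (hγstar : γstar ∈ Set.Icc (0 : ℝ) 1)
    (R σ : ℝ → ℝ) (hσ : ∀ γ ∈ Set.Icc (0 : ℝ) 1, 0 < σ γ)
    (hgapL : ∀ a ∈ Set.Icc (0 : ℝ) 1, ∀ b ∈ Set.Icc (0 : ℝ) 1,
      a ≤ b → b ≤ γstar → R a - R b ≥ m * max (σ a) (σ b) * (b - a))
    (hgapR : ∀ a ∈ Set.Icc (0 : ℝ) 1, ∀ b ∈ Set.Icc (0 : ℝ) 1,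
      γstar ≤ a → a ≤ b → R b - R a ≥ m * max (σ a) (σ b) * (b - a))
    (L : ℕ) (s : ℕ → ℕ) (hs : ∀ ℓ, 1 ≤ s ℓ)
    (X : ℕ → ℝ → ℕ → Ω → ℝ)
    (hXmeas : ∀ ℓ γ k, Measurable (X ℓ γ k))
    (hXindep : iIndepFun
      (fun p : ℕ × ℝ × ℕ => X p.1 p.2.1 p.2.2) P)
    (hXid : ∀ ℓ, ∀ γ ∈ Set.Icc (0 : ℝ) 1, ∀ k k',
      IdentDistrib (X ℓ γ k) (X ℓ γ k') P P)
    (hXmean : ∀ ℓ, ∀ γ ∈ Set.Icc (0 : ℝ) 1, ∀ k, ∫ ω, X ℓ γ k ω ∂P = R γ)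
    (hXsub : ∀ ℓ, ∀ γ ∈ Set.Icc (0 : ℝ) 1, ∀ k, IsSubGaussian P (X ℓ γ k) (R γ) (σ γ))
    (I J : ℕ → Ω → ℝ)
    (hI0 : ∀ ω, I 0 ω = 0) (hJ0 : ∀ ω, J 0 ω = 1)
    (hrec : ∀ ℓ : ℕ, ∀ ω,
      let a := (2 * I ℓ ω + J ℓ ω) / 3
      let b := (I ℓ ω + 2 * J ℓ ω) / 3
      let Rhata := (s (ℓ + 1) : ℝ)⁻¹ * ∑ k ∈ Finset.range (s (ℓ + 1)), X (ℓ + 1) a k ω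
      let Rhatb := (s (ℓ + 1) : ℝ)⁻¹ * ∑ k ∈ Finset.range (s (ℓ + 1)), X (ℓ + 1) b k ω
      (Rhatb ≤ Rhata → I (ℓ + 1) ω = a ∧ J (ℓ + 1) ω = J ℓ ω) ∧
      (Rhata < Rhatb → I (ℓ + 1) ω = I ℓ ω ∧ J (ℓ + 1) ω = b)) :
    P {ω | γstar ∉ Set.Icc (I L ω) (J L ω)} ≤
      ENNReal.ofReal (4 * ∑ ℓ ∈ Finset.Icc 1 L,
        Real.exp (-(2 / 3 : ℝ) ^ (2 * ℓ) * m ^ 2 * (s ℓ : ℝ) / 72)) := by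
  classical
  -- notation
  set f : ℕ × ℝ × ℕ → Ω → ℝ := fun p => X p.1 p.2.1 p.2.2 with hf
  have hfmeas : ∀ p, Measurable (f p) := fun p => hXmeas p.1 p.2.1 p.2.2
  -- the value of (I, J) is always on the grid
  have hIJgrid : ∀ ℓ ω, (I ℓ ω, J ℓ ω) ∈ tgrid ℓ := by
    intro ℓ
    induction ℓ with
    | zero => intro ω; rw [hI0, hJ0]; simp [tgrid]
    | succ ℓ ih =>
      intro ω
      have h := hrec ℓ ω
      simp only at h
      rcases le_or_gt ((s (ℓ + 1) : ℝ)⁻¹ * ∑ k ∈ Finset.range (s (ℓ + 1)),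
          X (ℓ + 1) ((I ℓ ω + 2 * J ℓ ω) / 3) k ω)
        ((s (ℓ + 1) : ℝ)⁻¹ * ∑ k ∈ Finset.range (s (ℓ + 1)),
          X (ℓ + 1) ((2 * I ℓ ω + J ℓ ω) / 3) k ω) with hc | hc
      · obtain ⟨hI', hJ'⟩ := h.1 hc
        simp only [tgrid, Finset.mem_union, Finset.mem_image]
        exact Or.inl ⟨(I ℓ ω, J ℓ ω), ih ω, by rw [hI', hJ']⟩
      · obtain ⟨hI', hJ'⟩ := h.2 hc
        simp only [tgrid, Finset.mem_union, Finset.mem_image]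
        exact Or.inr ⟨(I ℓ ω, J ℓ ω), ih ω, by rw [hI', hJ']⟩
  -- the events {(I ℓ, J ℓ) = p} are measurable w.r.t. the first ℓ steps
  have hEmeas : ∀ ℓ (i j : ℝ),
      MeasurableSet[salg f (tidx s ℓ)] {ω | I ℓ ω = i ∧ J ℓ ω = j} := by
    intro ℓ
    induction ℓ with
    | zero =>
      intro i j
      have hsimp : {ω | I 0 ω = i ∧ J 0 ω = j} = {_ω : Ω | (0:ℝ) = i ∧ (1:ℝ) = j} := by
        ext ω; rw [Set.mem_setOf_eq, Set.mem_setOf_eq, hI0, hJ0]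
      rw [hsimp]
      exact MeasurableSet.const _
    | succ ℓ ih =>
      intro i' j'
      have hq : ∀ γ ∈ tquery (ℓ+1), Measurable[salg f (tidx s (ℓ+1))]
          (fun ω => (s (ℓ+1) : ℝ)⁻¹ * ∑ k ∈ Finset.range (s (ℓ+1)), X (ℓ+1) γ k ω) := by
        intro γ hγ
        refine Measurable.const_mul ?_ _
        refine Finset.measurable_sum _ fun k hk => ?_
        exact meas_coord f (tidx_mem (Nat.succ_le_succ (Nat.zero_le ℓ)) le_rfl hγ
          (Finset.mem_range.mp hk))
      have hset : {ω | I (ℓ+1) ω = i' ∧ J (ℓ+1) ω = j'} =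
          ⋃ p ∈ (tgrid ℓ : Set (ℝ×ℝ)), ({ω | I ℓ ω = p.1 ∧ J ℓ ω = p.2} ∩
            ({ω | (i' = (2*p.1+p.2)/3 ∧ j' = p.2) ∧
                (s (ℓ+1) : ℝ)⁻¹ * ∑ k ∈ Finset.range (s (ℓ+1)), X (ℓ+1) ((p.1+2*p.2)/3) k ω ≤
                (s (ℓ+1) : ℝ)⁻¹ * ∑ k ∈ Finset.range (s (ℓ+1)), X (ℓ+1) ((2*p.1+p.2)/3) k ω} ∪
             {ω | (i' = p.1 ∧ j' = (p.1+2*p.2)/3) ∧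
                (s (ℓ+1) : ℝ)⁻¹ * ∑ k ∈ Finset.range (s (ℓ+1)), X (ℓ+1) ((2*p.1+p.2)/3) k ω <
                (s (ℓ+1) : ℝ)⁻¹ * ∑ k ∈ Finset.range (s (ℓ+1)), X (ℓ+1) ((p.1+2*p.2)/3) k ω})) := by
        ext ω
        simp only [Set.mem_setOf_eq, Set.mem_iUnion, Set.mem_inter_iff, Set.mem_union,
          exists_prop, Finset.mem_coe]
        constructor
        · rintro ⟨hi', hj'⟩
          refine ⟨(I ℓ ω, J ℓ ω), hIJgrid ℓ ω, ⟨rfl, rfl⟩, ?_⟩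
          have h := hrec ℓ ω
          simp only at h
          rcases le_or_gt
            ((s (ℓ + 1) : ℝ)⁻¹ * ∑ k ∈ Finset.range (s (ℓ + 1)),
              X (ℓ + 1) ((I ℓ ω + 2 * J ℓ ω) / 3) k ω)
            ((s (ℓ + 1) : ℝ)⁻¹ * ∑ k ∈ Finset.range (s (ℓ + 1)),
              X (ℓ + 1) ((2 * I ℓ ω + J ℓ ω) / 3) k ω) with hc | hc
          · obtain ⟨hI', hJ'⟩ := h.1 hc
            exact Or.inl ⟨⟨by rw [← hi', hI'], by rw [← hj', hJ']⟩, hc⟩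
          · obtain ⟨hI', hJ'⟩ := h.2 hc
            exact Or.inr ⟨⟨by rw [← hi', hI'], by rw [← hj', hJ']⟩, hc⟩
        · rintro ⟨p, hp, ⟨hEi, hEj⟩, hG⟩
          have h := hrec ℓ ω
          simp only at h
          rw [hEi, hEj] at h
          rcases hG with ⟨⟨hi', hj'⟩, hc⟩ | ⟨⟨hi', hj'⟩, hc⟩
          · obtain ⟨hI', hJ'⟩ := h.1 hc
            exact ⟨hI'.trans hi'.symm, hJ'.trans hj'.symm⟩
          · obtain ⟨hI', hJ'⟩ := h.2 hc
            exact ⟨hI'.trans hi'.symm, hJ'.trans hj'.symm⟩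
      rw [hset]
      refine MeasurableSet.biUnion (tgrid ℓ).countable_toSet fun p hp => ?_
      refine MeasurableSet.inter ?_ ?_
      · exact salg_mono f (tidx_mono (Nat.le_succ ℓ)) _ (ih p.1 p.2)
      · refine MeasurableSet.union ?_ ?_
        · rw [Set.setOf_and]
          exact (MeasurableSet.const _).inter
            (measurableSet_le (hq _ (tquery_memB hp)) (hq _ (tquery_memA hp)))
        · rw [Set.setOf_and]
          exact (MeasurableSet.const _).inter
            (measurableSet_lt (hq _ (tquery_memA hp)) (hq _ (tquery_memB hp)))
  -- per-step bound
  have hstep : ∀ ℓ : ℕ,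
      P {ω | γstar ∈ Set.Icc (I ℓ ω) (J ℓ ω) ∧ γstar ∉ Set.Icc (I (ℓ+1) ω) (J (ℓ+1) ω)} ≤
      ENNReal.ofReal (4 * Real.exp (-(2/3:ℝ)^(2*(ℓ+1)) * m^2 * (s (ℓ+1) : ℝ) / 72)) := by
    intro ℓ
    have hA : (0:ℝ) < (2/3:ℝ)^(ℓ+1) := by positivity
    have hn0 : (0:ℝ) < (s (ℓ+1) : ℝ) := by exact_mod_cast hs (ℓ+1)
    have he0 : 0 ≤ Real.exp (-(2/3:ℝ)^(2*(ℓ+1)) * m^2 * (s (ℓ+1) : ℝ) / 72) := Real.exp_nonneg _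
    -- tail bounds for a fixed query point
    have htail : ∀ γ ∈ Set.Icc (0:ℝ) 1,
        P (devP X R (ℓ+1) (s (ℓ+1)) γ (m * σ γ * (2/3:ℝ)^(ℓ+1) / 4)) ≤
          ENNReal.ofReal (Real.exp (-(2/3:ℝ)^(2*(ℓ+1)) * m^2 * (s (ℓ+1) : ℝ) / 72)) ∧
        P (devM X R (ℓ+1) (s (ℓ+1)) γ (m * σ γ * (2/3:ℝ)^(ℓ+1) / 4)) ≤
          ENNReal.ofReal (Real.exp (-(2/3:ℝ)^(2*(ℓ+1)) * m^2 * (s (ℓ+1) : ℝ) / 72)) := by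
      intro γ hγ
      have hσγ := hσ γ hγ
      have hinj : Function.Injective (fun k : ℕ => ((ℓ+1 : ℕ), γ, k)) := by
        intro k k' hk; simpa using hk
      have hbase := iIndepFun_precomp hXindep hinj
      have hu : 0 ≤ m * σ γ * (2/3:ℝ)^(ℓ+1) / 4 := by positivity
      have hexp : Real.exp (-(s (ℓ+1) : ℝ) * (m * σ γ * (2/3:ℝ)^(ℓ+1)/4)^2 / (2 * σ γ ^ 2)) ≤
          Real.exp (-(2/3:ℝ)^(2*(ℓ+1)) * m^2 * (s (ℓ+1) : ℝ) / 72) := by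
        rw [Real.exp_le_exp]
        have h1 : (-(s (ℓ+1) : ℝ)) * (m * σ γ * (2/3:ℝ)^(ℓ+1)/4)^2 / (2 * σ γ ^ 2)
            = -(s (ℓ+1) : ℝ) * (m^2 * ((2/3:ℝ)^(ℓ+1))^2) / 32 := by
          field_simp
          ring
        have h2 : (2/3:ℝ)^(2*(ℓ+1)) = ((2/3:ℝ)^(ℓ+1))^2 := by
          rw [pow_mul']
        rw [h1, h2]
        have h3 : 0 ≤ (s (ℓ+1) : ℝ) * (m^2 * ((2/3:ℝ)^(ℓ+1))^2) := by positivity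
        nlinarith [h3]
      constructor
      · have hind1 : iIndepFun
            (fun k => fun ω => X (ℓ+1) γ k ω - R γ) P :=
          hbase.comp (fun _ x => x - R γ) (fun _ => measurable_id.sub measurable_const)
        have hmeasY : ∀ k, Measurable (fun ω => X (ℓ+1) γ k ω - R γ) :=
          fun k => (hXmeas _ _ _).sub measurable_const
        have hch := chernoff_tail P (fun k ω => X (ℓ+1) γ k ω - R γ) hmeasY hind1 (σ γ) hσγ
          (fun k l => hXsub (ℓ+1) γ hγ k l) (s (ℓ+1)) _ hu
        exact le_trans hch (ENNReal.ofReal_le_ofReal hexp)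
      · have hind2 : iIndepFun
            (fun k => fun ω => R γ - X (ℓ+1) γ k ω) P :=
          hbase.comp (fun _ x => R γ - x) (fun _ => measurable_const.sub measurable_id)
        have hmeasY : ∀ k, Measurable (fun ω => R γ - X (ℓ+1) γ k ω) :=
          fun k => measurable_const.sub (hXmeas _ _ _)
        have hsubY : ∀ k (l : ℝ),
            Integrable (fun ω => Real.exp (l * (R γ - X (ℓ+1) γ k ω))) P ∧
            ∫ ω, Real.exp (l * (R γ - X (ℓ+1) γ k ω)) ∂P ≤ Real.exp (l ^ 2 * σ γ ^ 2 / 2) := by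
          intro k l
          have h := hXsub (ℓ+1) γ hγ k (-l)
          have heq : (fun ω => Real.exp (l * (R γ - X (ℓ+1) γ k ω)))
              = (fun ω => Real.exp ((-l) * (X (ℓ+1) γ k ω - R γ))) := by
            funext ω; ring_nf
          constructor
          · rw [heq]; exact h.1
          · have h2 := h.2
            calc ∫ ω, Real.exp (l * (R γ - X (ℓ+1) γ k ω)) ∂P
                = ∫ ω, Real.exp ((-l) * (X (ℓ+1) γ k ω - R γ)) ∂P := by rw [heq]
              _ ≤ Real.exp ((-l) ^ 2 * σ γ ^ 2 / 2) := h.2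
              _ = Real.exp (l ^ 2 * σ γ ^ 2 / 2) := by rw [neg_sq]
        have hch := chernoff_tail P (fun k ω => R γ - X (ℓ+1) γ k ω) hmeasY hind2 (σ γ) hσγ
          hsubY (s (ℓ+1)) _ hu
        exact le_trans hch (ENNReal.ofReal_le_ofReal hexp)
    -- covering of the bad event by grid events and deviation events
    have hsub : {ω | γstar ∈ Set.Icc (I ℓ ω) (J ℓ ω) ∧ γstar ∉ Set.Icc (I (ℓ+1) ω) (J (ℓ+1) ω)} ⊆
        ⋃ p ∈ tgrid ℓ, ({ω | I ℓ ω = p.1 ∧ J ℓ ω = p.2} ∩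
          (devP X R (ℓ+1) (s (ℓ+1)) (pA p) (m * σ (pA p) * (2/3:ℝ)^(ℓ+1) / 4) ∪
           devM X R (ℓ+1) (s (ℓ+1)) (pA p) (m * σ (pA p) * (2/3:ℝ)^(ℓ+1) / 4) ∪
           devP X R (ℓ+1) (s (ℓ+1)) (pB p) (m * σ (pB p) * (2/3:ℝ)^(ℓ+1) / 4) ∪
           devM X R (ℓ+1) (s (ℓ+1)) (pB p) (m * σ (pB p) * (2/3:ℝ)^(ℓ+1) / 4))) := by
      rintro ω ⟨hin, hout⟩
      have hpg := hIJgrid ℓ ω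
      refine Set.mem_iUnion₂.mpr ⟨(I ℓ ω, J ℓ ω), hpg, ⟨rfl, rfl⟩, ?_⟩
      obtain ⟨hi0, hj1, hlen⟩ := tgrid_bounds ℓ _ hpg
      simp only at hi0 hj1 hlen
      have hps : (2/3:ℝ)^(ℓ+1) = (2/3:ℝ)^ℓ * (2/3) := pow_succ _ _
      have hA0 : (0:ℝ) < (2/3:ℝ)^ℓ := by positivity
      obtain ⟨hγ1, hγ2⟩ := hin
      have h := hrec ℓ ω
      simp only at h
      have ha0 : 0 ≤ (2 * I ℓ ω + J ℓ ω)/3 := by linarith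
      have ha1 : (2 * I ℓ ω + J ℓ ω)/3 ≤ 1 := by linarith
      have hb0 : 0 ≤ (I ℓ ω + 2 * J ℓ ω)/3 := by linarith
      have hb1 : (I ℓ ω + 2 * J ℓ ω)/3 ≤ 1 := by linarith
      have hab : (2 * I ℓ ω + J ℓ ω)/3 ≤ (I ℓ ω + 2 * J ℓ ω)/3 := by linarith
      have hba : (I ℓ ω + 2 * J ℓ ω)/3 - (2 * I ℓ ω + J ℓ ω)/3 = (2/3:ℝ)^(ℓ+1)/2 := by
        rw [hps]; linarith
      have hσa := hσ _ ⟨ha0, ha1⟩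
      have hσb := hσ _ ⟨hb0, hb1⟩
      have hmaxa : σ ((2 * I ℓ ω + J ℓ ω)/3) ≤
          max (σ ((2 * I ℓ ω + J ℓ ω)/3)) (σ ((I ℓ ω + 2 * J ℓ ω)/3)) := le_max_left _ _
      have hmaxb : σ ((I ℓ ω + 2 * J ℓ ω)/3) ≤
          max (σ ((2 * I ℓ ω + J ℓ ω)/3)) (σ ((I ℓ ω + 2 * J ℓ ω)/3)) := le_max_right _ _
      have hE2 : (m * σ ((2 * I ℓ ω + J ℓ ω)/3) * (2/3:ℝ)^(ℓ+1)/4) +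
            (m * σ ((I ℓ ω + 2 * J ℓ ω)/3) * (2/3:ℝ)^(ℓ+1)/4) ≤
          m * max (σ ((2 * I ℓ ω + J ℓ ω)/3)) (σ ((I ℓ ω + 2 * J ℓ ω)/3)) *
            ((I ℓ ω + 2 * J ℓ ω)/3 - (2 * I ℓ ω + J ℓ ω)/3) := by
        rw [hba]
        nlinarith [mul_nonneg (mul_nonneg hm.le hA.le) (sub_nonneg.mpr hmaxa),
          mul_nonneg (mul_nonneg hm.le hA.le) (sub_nonneg.mpr hmaxb)]
      have hsplitPa : ∑ k ∈ Finset.range (s (ℓ+1)),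
            (X (ℓ+1) ((2 * I ℓ ω + J ℓ ω)/3) k ω - R ((2 * I ℓ ω + J ℓ ω)/3)) =
          (∑ k ∈ Finset.range (s (ℓ+1)), X (ℓ+1) ((2 * I ℓ ω + J ℓ ω)/3) k ω) -
            (s (ℓ+1) : ℝ) * R ((2 * I ℓ ω + J ℓ ω)/3) := by
        rw [Finset.sum_sub_distrib, Finset.sum_const, Finset.card_range, nsmul_eq_mul]
      have hsplitMa : ∑ k ∈ Finset.range (s (ℓ+1)),
            (R ((2 * I ℓ ω + J ℓ ω)/3) - X (ℓ+1) ((2 * I ℓ ω + J ℓ ω)/3) k ω) =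
          (s (ℓ+1) : ℝ) * R ((2 * I ℓ ω + J ℓ ω)/3) -
            ∑ k ∈ Finset.range (s (ℓ+1)), X (ℓ+1) ((2 * I ℓ ω + J ℓ ω)/3) k ω := by
        rw [Finset.sum_sub_distrib, Finset.sum_const, Finset.card_range, nsmul_eq_mul]
      have hsplitPb : ∑ k ∈ Finset.range (s (ℓ+1)),
            (X (ℓ+1) ((I ℓ ω + 2 * J ℓ ω)/3) k ω - R ((I ℓ ω + 2 * J ℓ ω)/3)) =
          (∑ k ∈ Finset.range (s (ℓ+1)), X (ℓ+1) ((I ℓ ω + 2 * J ℓ ω)/3) k ω) -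
            (s (ℓ+1) : ℝ) * R ((I ℓ ω + 2 * J ℓ ω)/3) := by
        rw [Finset.sum_sub_distrib, Finset.sum_const, Finset.card_range, nsmul_eq_mul]
      have hsplitMb : ∑ k ∈ Finset.range (s (ℓ+1)),
            (R ((I ℓ ω + 2 * J ℓ ω)/3) - X (ℓ+1) ((I ℓ ω + 2 * J ℓ ω)/3) k ω) =
          (s (ℓ+1) : ℝ) * R ((I ℓ ω + 2 * J ℓ ω)/3) -
            ∑ k ∈ Finset.range (s (ℓ+1)), X (ℓ+1) ((I ℓ ω + 2 * J ℓ ω)/3) k ω := by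
        rw [Finset.sum_sub_distrib, Finset.sum_const, Finset.card_range, nsmul_eq_mul]
      simp only [devP, devM, pA, pB, Set.mem_union, Set.mem_setOf_eq]
      rcases le_or_gt
        ((s (ℓ + 1) : ℝ)⁻¹ * ∑ k ∈ Finset.range (s (ℓ + 1)),
          X (ℓ + 1) ((I ℓ ω + 2 * J ℓ ω) / 3) k ω)
        ((s (ℓ + 1) : ℝ)⁻¹ * ∑ k ∈ Finset.range (s (ℓ + 1)),
          X (ℓ + 1) ((2 * I ℓ ω + J ℓ ω) / 3) k ω) with hc | hc
      · obtain ⟨hI', hJ'⟩ := h.1 hc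
        have hγa : γstar < (2 * I ℓ ω + J ℓ ω)/3 := by
          by_contra hna
          push_neg at hna
          exact hout (by rw [hI', hJ']; exact ⟨hna, hγ2⟩)
        have hgap := hgapR _ ⟨ha0, ha1⟩ _ ⟨hb0, hb1⟩ hγa.le hab
        have hcs : (∑ k ∈ Finset.range (s (ℓ+1)), X (ℓ+1) ((I ℓ ω + 2 * J ℓ ω)/3) k ω) ≤
            ∑ k ∈ Finset.range (s (ℓ+1)), X (ℓ+1) ((2 * I ℓ ω + J ℓ ω)/3) k ω :=
          (mul_le_mul_iff_right₀ (inv_pos.mpr hn0)).mp hc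
        have hE1 := mul_le_mul_of_nonneg_left hgap hn0.le
        have hE3 := mul_le_mul_of_nonneg_left hE2 hn0.le
        have key : (s (ℓ+1) : ℝ) * (m * σ ((2 * I ℓ ω + J ℓ ω)/3) * (2/3:ℝ)^(ℓ+1)/4) ≤
              (∑ k ∈ Finset.range (s (ℓ+1)), X (ℓ+1) ((2 * I ℓ ω + J ℓ ω)/3) k ω) -
                (s (ℓ+1) : ℝ) * R ((2 * I ℓ ω + J ℓ ω)/3) ∨
            (s (ℓ+1) : ℝ) * (m * σ ((I ℓ ω + 2 * J ℓ ω)/3) * (2/3:ℝ)^(ℓ+1)/4) ≤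
              (s (ℓ+1) : ℝ) * R ((I ℓ ω + 2 * J ℓ ω)/3) -
                ∑ k ∈ Finset.range (s (ℓ+1)), X (ℓ+1) ((I ℓ ω + 2 * J ℓ ω)/3) k ω := by
          by_contra hK
          push_neg at hK
          obtain ⟨k1, k2⟩ := hK
          linarith [hE1, hE3, hcs, k1, k2]
        rcases key with hk | hk
        · exact Or.inl (Or.inl (Or.inl (by rw [hsplitPa]; exact hk)))
        · exact Or.inr (by rw [hsplitMb]; exact hk)
      · obtain ⟨hI', hJ'⟩ := h.2 hc
        have hγb : (I ℓ ω + 2 * J ℓ ω)/3 < γstar := by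
          by_contra hna
          push_neg at hna
          exact hout (by rw [hI', hJ']; exact ⟨hγ1, hna⟩)
        have hgap := hgapL _ ⟨ha0, ha1⟩ _ ⟨hb0, hb1⟩ hab hγb.le
        have hcs : (∑ k ∈ Finset.range (s (ℓ+1)), X (ℓ+1) ((2 * I ℓ ω + J ℓ ω)/3) k ω) ≤
            ∑ k ∈ Finset.range (s (ℓ+1)), X (ℓ+1) ((I ℓ ω + 2 * J ℓ ω)/3) k ω :=
          ((mul_le_mul_iff_right₀ (inv_pos.mpr hn0)).mp hc.le)
        have hE1 := mul_le_mul_of_nonneg_left hgap hn0.le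
        have hE3 := mul_le_mul_of_nonneg_left hE2 hn0.le
        have key : (s (ℓ+1) : ℝ) * (m * σ ((I ℓ ω + 2 * J ℓ ω)/3) * (2/3:ℝ)^(ℓ+1)/4) ≤
              (∑ k ∈ Finset.range (s (ℓ+1)), X (ℓ+1) ((I ℓ ω + 2 * J ℓ ω)/3) k ω) -
                (s (ℓ+1) : ℝ) * R ((I ℓ ω + 2 * J ℓ ω)/3) ∨
            (s (ℓ+1) : ℝ) * (m * σ ((2 * I ℓ ω + J ℓ ω)/3) * (2/3:ℝ)^(ℓ+1)/4) ≤
              (s (ℓ+1) : ℝ) * R ((2 * I ℓ ω + J ℓ ω)/3) -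
                ∑ k ∈ Finset.range (s (ℓ+1)), X (ℓ+1) ((2 * I ℓ ω + J ℓ ω)/3) k ω := by
          by_contra hK
          push_neg at hK
          obtain ⟨k1, k2⟩ := hK
          linarith [hE1, hE3, hcs, k1, k2]
        rcases key with hk | hk
        · exact Or.inl (Or.inr (by rw [hsplitPb]; exact hk))
        · exact Or.inl (Or.inl (Or.inr (by rw [hsplitMa]; exact hk)))
    -- measure bound via independence
    refine le_trans (measure_mono hsub) ?_
    refine le_trans (measure_biUnion_finset_le _ _) ?_
    have hD4 : ∀ p ∈ tgrid ℓ,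
        P (devP X R (ℓ+1) (s (ℓ+1)) (pA p) (m * σ (pA p) * (2/3:ℝ)^(ℓ+1) / 4) ∪
           devM X R (ℓ+1) (s (ℓ+1)) (pA p) (m * σ (pA p) * (2/3:ℝ)^(ℓ+1) / 4) ∪
           devP X R (ℓ+1) (s (ℓ+1)) (pB p) (m * σ (pB p) * (2/3:ℝ)^(ℓ+1) / 4) ∪
           devM X R (ℓ+1) (s (ℓ+1)) (pB p) (m * σ (pB p) * (2/3:ℝ)^(ℓ+1) / 4)) ≤
        ENNReal.ofReal (4 * Real.exp (-(2/3:ℝ)^(2*(ℓ+1)) * m^2 * (s (ℓ+1) : ℝ) / 72)) := by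
      intro p hp
      obtain ⟨hp0, hp1, hplen⟩ := tgrid_bounds ℓ p hp
      have hp12 : p.1 ≤ p.2 := tgrid_le ℓ hp
      have hpA01 : pA p ∈ Set.Icc (0:ℝ) 1 := by
        simp only [pA, Set.mem_Icc]; constructor <;> linarith
      have hpB01 : pB p ∈ Set.Icc (0:ℝ) 1 := by
        simp only [pB, Set.mem_Icc]; constructor <;> linarith
      have ht1 := htail (pA p) hpA01
      have ht2 := htail (pB p) hpB01
      calc P (devP X R (ℓ+1) (s (ℓ+1)) (pA p) (m * σ (pA p) * (2/3:ℝ)^(ℓ+1) / 4) ∪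
           devM X R (ℓ+1) (s (ℓ+1)) (pA p) (m * σ (pA p) * (2/3:ℝ)^(ℓ+1) / 4) ∪
           devP X R (ℓ+1) (s (ℓ+1)) (pB p) (m * σ (pB p) * (2/3:ℝ)^(ℓ+1) / 4) ∪
           devM X R (ℓ+1) (s (ℓ+1)) (pB p) (m * σ (pB p) * (2/3:ℝ)^(ℓ+1) / 4))
          ≤ P (devP X R (ℓ+1) (s (ℓ+1)) (pA p) (m * σ (pA p) * (2/3:ℝ)^(ℓ+1) / 4)) +
            P (devM X R (ℓ+1) (s (ℓ+1)) (pA p) (m * σ (pA p) * (2/3:ℝ)^(ℓ+1) / 4)) +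
            P (devP X R (ℓ+1) (s (ℓ+1)) (pB p) (m * σ (pB p) * (2/3:ℝ)^(ℓ+1) / 4)) +
            P (devM X R (ℓ+1) (s (ℓ+1)) (pB p) (m * σ (pB p) * (2/3:ℝ)^(ℓ+1) / 4)) := by
            refine le_trans (measure_union_le _ _) ?_
            refine add_le_add_left ?_ _
            refine le_trans (measure_union_le _ _) ?_
            refine add_le_add_left ?_ _
            exact measure_union_le _ _
        _ ≤ ENNReal.ofReal (Real.exp (-(2/3:ℝ)^(2*(ℓ+1)) * m^2 * (s (ℓ+1) : ℝ) / 72)) +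
            ENNReal.ofReal (Real.exp (-(2/3:ℝ)^(2*(ℓ+1)) * m^2 * (s (ℓ+1) : ℝ) / 72)) +
            ENNReal.ofReal (Real.exp (-(2/3:ℝ)^(2*(ℓ+1)) * m^2 * (s (ℓ+1) : ℝ) / 72)) +
            ENNReal.ofReal (Real.exp (-(2/3:ℝ)^(2*(ℓ+1)) * m^2 * (s (ℓ+1) : ℝ) / 72)) :=
            add_le_add (add_le_add (add_le_add ht1.1 ht1.2) ht2.1) ht2.2
        _ = ENNReal.ofReal (4 * Real.exp (-(2/3:ℝ)^(2*(ℓ+1)) * m^2 * (s (ℓ+1) : ℝ) / 72)) := by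
            rw [← ENNReal.ofReal_add he0 he0, ← ENNReal.ofReal_add (by positivity) he0,
              ← ENNReal.ofReal_add (by positivity) he0]
            congr 1
            ring
    have hDsalg : ∀ p : ℝ × ℝ,
        MeasurableSet[salg f (((Finset.range (s (ℓ+1))).image fun k => ((ℓ+1 : ℕ), pA p, k)) ∪
            ((Finset.range (s (ℓ+1))).image fun k => ((ℓ+1 : ℕ), pB p, k)))]
          (devP X R (ℓ+1) (s (ℓ+1)) (pA p) (m * σ (pA p) * (2/3:ℝ)^(ℓ+1) / 4) ∪
           devM X R (ℓ+1) (s (ℓ+1)) (pA p) (m * σ (pA p) * (2/3:ℝ)^(ℓ+1) / 4) ∪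
           devP X R (ℓ+1) (s (ℓ+1)) (pB p) (m * σ (pB p) * (2/3:ℝ)^(ℓ+1) / 4) ∪
           devM X R (ℓ+1) (s (ℓ+1)) (pB p) (m * σ (pB p) * (2/3:ℝ)^(ℓ+1) / 4)) := by
      intro p
      have hmemA : ∀ k ∈ Finset.range (s (ℓ+1)), ((ℓ+1 : ℕ), pA p, k) ∈
          (((Finset.range (s (ℓ+1))).image fun k => ((ℓ+1 : ℕ), pA p, k)) ∪
            ((Finset.range (s (ℓ+1))).image fun k => ((ℓ+1 : ℕ), pB p, k))) := fun k hk =>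
        Finset.mem_union.mpr (Or.inl (Finset.mem_image.mpr ⟨k, hk, rfl⟩))
      have hmemB : ∀ k ∈ Finset.range (s (ℓ+1)), ((ℓ+1 : ℕ), pB p, k) ∈
          (((Finset.range (s (ℓ+1))).image fun k => ((ℓ+1 : ℕ), pA p, k)) ∪
            ((Finset.range (s (ℓ+1))).image fun k => ((ℓ+1 : ℕ), pB p, k))) := fun k hk =>
        Finset.mem_union.mpr (Or.inr (Finset.mem_image.mpr ⟨k, hk, rfl⟩))
      refine MeasurableSet.union (MeasurableSet.union (MeasurableSet.union ?_ ?_) ?_) ?_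
      · exact measurableSet_le measurable_const
          (Finset.measurable_sum _ fun k hk => (meas_coord f (hmemA k hk)).sub measurable_const)
      · exact measurableSet_le measurable_const
          (Finset.measurable_sum _ fun k hk =>
            measurable_const.sub (meas_coord f (hmemA k hk)))
      · exact measurableSet_le measurable_const
          (Finset.measurable_sum _ fun k hk => (meas_coord f (hmemB k hk)).sub measurable_const)
      · exact measurableSet_le measurable_const
          (Finset.measurable_sum _ fun k hk =>
            measurable_const.sub (meas_coord f (hmemB k hk)))
    have hdisj : ∀ p : ℝ × ℝ, Disjoint (tidx s ℓ)
        (((Finset.range (s (ℓ+1))).image fun k => ((ℓ+1 : ℕ), pA p, k)) ∪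
            ((Finset.range (s (ℓ+1))).image fun k => ((ℓ+1 : ℕ), pB p, k))) := by
      intro p
      refine Finset.disjoint_left.mpr fun q hq hq' => ?_
      have h1 := tidx_fst hq
      have h2 : q.1 = ℓ + 1 := by
        rcases Finset.mem_union.mp hq' with hh | hh <;>
          · obtain ⟨k, _, rfl⟩ := Finset.mem_image.mp hh
            rfl
      omega
    have hprod : ∀ p ∈ tgrid ℓ,
        P ({ω | I ℓ ω = p.1 ∧ J ℓ ω = p.2} ∩
          (devP X R (ℓ+1) (s (ℓ+1)) (pA p) (m * σ (pA p) * (2/3:ℝ)^(ℓ+1) / 4) ∪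
           devM X R (ℓ+1) (s (ℓ+1)) (pA p) (m * σ (pA p) * (2/3:ℝ)^(ℓ+1) / 4) ∪
           devP X R (ℓ+1) (s (ℓ+1)) (pB p) (m * σ (pB p) * (2/3:ℝ)^(ℓ+1) / 4) ∪
           devM X R (ℓ+1) (s (ℓ+1)) (pB p) (m * σ (pB p) * (2/3:ℝ)^(ℓ+1) / 4))) =
        P {ω | I ℓ ω = p.1 ∧ J ℓ ω = p.2} *
        P (devP X R (ℓ+1) (s (ℓ+1)) (pA p) (m * σ (pA p) * (2/3:ℝ)^(ℓ+1) / 4) ∪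
           devM X R (ℓ+1) (s (ℓ+1)) (pA p) (m * σ (pA p) * (2/3:ℝ)^(ℓ+1) / 4) ∪
           devP X R (ℓ+1) (s (ℓ+1)) (pB p) (m * σ (pB p) * (2/3:ℝ)^(ℓ+1) / 4) ∪
           devM X R (ℓ+1) (s (ℓ+1)) (pB p) (m * σ (pB p) * (2/3:ℝ)^(ℓ+1) / 4)) :=
      fun p hp => indep_of_salg hfmeas hXindep (hdisj p) (hEmeas ℓ p.1 p.2) (hDsalg p)
    have hsum1 : ∑ p ∈ tgrid ℓ, P {ω | I ℓ ω = p.1 ∧ J ℓ ω = p.2} ≤ 1 := by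
      have hpd : (↑(tgrid ℓ) : Set (ℝ × ℝ)).PairwiseDisjoint
          (fun p => {ω | I ℓ ω = p.1 ∧ J ℓ ω = p.2}) := by
        intro p _ q _ hpq
        refine Set.disjoint_left.mpr fun ω h1 h2 => hpq ?_
        obtain ⟨h1a, h1b⟩ := h1
        obtain ⟨h2a, h2b⟩ := h2
        exact Prod.ext (h1a ▸ h2a) (h1b ▸ h2b)
      rw [← measure_biUnion_finset hpd fun p _ => salg_le hfmeas _ _ (hEmeas ℓ p.1 p.2)]
      exact prob_le_one
    calc ∑ p ∈ tgrid ℓ, P ({ω | I ℓ ω = p.1 ∧ J ℓ ω = p.2} ∩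
          (devP X R (ℓ+1) (s (ℓ+1)) (pA p) (m * σ (pA p) * (2/3:ℝ)^(ℓ+1) / 4) ∪
           devM X R (ℓ+1) (s (ℓ+1)) (pA p) (m * σ (pA p) * (2/3:ℝ)^(ℓ+1) / 4) ∪
           devP X R (ℓ+1) (s (ℓ+1)) (pB p) (m * σ (pB p) * (2/3:ℝ)^(ℓ+1) / 4) ∪
           devM X R (ℓ+1) (s (ℓ+1)) (pB p) (m * σ (pB p) * (2/3:ℝ)^(ℓ+1) / 4)))
        ≤ ∑ p ∈ tgrid ℓ, P {ω | I ℓ ω = p.1 ∧ J ℓ ω = p.2} *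
            ENNReal.ofReal (4 * Real.exp (-(2/3:ℝ)^(2*(ℓ+1)) * m^2 * (s (ℓ+1) : ℝ) / 72)) := by
          refine Finset.sum_le_sum fun p hp => ?_
          rw [hprod p hp]
          exact mul_le_mul_right (hD4 p hp) _
      _ = (∑ p ∈ tgrid ℓ, P {ω | I ℓ ω = p.1 ∧ J ℓ ω = p.2}) *
            ENNReal.ofReal (4 * Real.exp (-(2/3:ℝ)^(2*(ℓ+1)) * m^2 * (s (ℓ+1) : ℝ) / 72)) :=
          (Finset.sum_mul _ _ _).symm
      _ ≤ 1 * ENNReal.ofReal (4 * Real.exp (-(2/3:ℝ)^(2*(ℓ+1)) * m^2 * (s (ℓ+1) : ℝ) / 72)) :=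
          mul_le_mul_left hsum1 _
      _ = ENNReal.ofReal (4 * Real.exp (-(2/3:ℝ)^(2*(ℓ+1)) * m^2 * (s (ℓ+1) : ℝ) / 72)) :=
          one_mul _
  -- covering
  have hcover : {ω | γstar ∉ Set.Icc (I L ω) (J L ω)} ⊆
      ⋃ ℓ ∈ Finset.range L,
        {ω | γstar ∈ Set.Icc (I ℓ ω) (J ℓ ω) ∧ γstar ∉ Set.Icc (I (ℓ+1) ω) (J (ℓ+1) ω)} := by
    induction L with
    | zero =>
      intro ω hω
      exfalso
      apply hω
      rw [hI0, hJ0]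
      exact hγstar
    | succ L ih =>
      intro ω hω
      by_cases hL : γstar ∈ Set.Icc (I L ω) (J L ω)
      · exact Set.mem_biUnion (Finset.self_mem_range_succ L) ⟨hL, hω⟩
      · have := ih hL
        simp only [Set.mem_iUnion, exists_prop] at this ⊢
        obtain ⟨ℓ, hℓ, hmem⟩ := this
        exact ⟨ℓ, Finset.mem_range.mp hℓ |>.trans (Nat.lt_succ_self L) |> Finset.mem_range.mpr, hmem⟩
  calc P {ω | γstar ∉ Set.Icc (I L ω) (J L ω)}
      ≤ P (⋃ ℓ ∈ Finset.range L,
        {ω | γstar ∈ Set.Icc (I ℓ ω) (J ℓ ω) ∧ γstar ∉ Set.Icc (I (ℓ+1) ω) (J (ℓ+1) ω)}) :=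
        measure_mono hcover
    _ ≤ ∑ ℓ ∈ Finset.range L, P {ω | γstar ∈ Set.Icc (I ℓ ω) (J ℓ ω) ∧
          γstar ∉ Set.Icc (I (ℓ+1) ω) (J (ℓ+1) ω)} := measure_biUnion_finset_le _ _
    _ ≤ ∑ ℓ ∈ Finset.range L,
          ENNReal.ofReal (4 * Real.exp (-(2/3:ℝ)^(2*(ℓ+1)) * m^2 * (s (ℓ+1) : ℝ) / 72)) :=
        Finset.sum_le_sum fun ℓ _ => hstep ℓ
    _ = ENNReal.ofReal (∑ ℓ ∈ Finset.range L,
          4 * Real.exp (-(2/3:ℝ)^(2*(ℓ+1)) * m^2 * (s (ℓ+1) : ℝ) / 72)) := by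
        rw [ENNReal.ofReal_sum_of_nonneg]
        intro ℓ _
        positivity
    _ = ENNReal.ofReal (4 * ∑ ℓ ∈ Finset.Icc 1 L,
          Real.exp (-(2 / 3 : ℝ) ^ (2 * ℓ) * m ^ 2 * (s ℓ : ℝ) / 72)) := by
        congr 1
        rw [Finset.mul_sum, show Finset.Icc 1 L = Finset.Ico 1 (L+1) from (Finset.Ico_add_one_right_eq_Icc 1 L).symm,
          Finset.sum_Ico_eq_sum_range]
        simp [add_comm 1]
end

section
/- Let $m > 0$ and $s \ge 1$ a natural number. Let $i < j$ be reals, $a = (2i+j)/3$, $b = (i+2j)/3$, and let $\gamma_* \ge b$. Let $R_a, R_b \in \mathbb{R}$ and $\sigma_a, \sigma_b > 0$ satisfy $R_a - R_b \ge m \max\{\sigma_a, \sigma_b\}(b - a)$. Let $X_1, \dots, X_s$ be i.i.d. real random variables with mean $R_a$ that are $\sigma_a^2$-sub-Gaussian about their mean, and let $Y_1, \dots, Y_s$ be i.i.d. real random variables with mean $R_b$ that are $\sigma_b^2$-sub-Gaussian about their mean (defined on the same probability space, with no independence assumed between the $X$'s and the $Y$'s). Let $\hat R_a = \frac{1}{s}\sum_{k=1}^s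 X_k$ and $\hat R_b = \frac{1}{s}\sum_{k=1}^s Y_k$. Then $\Pr(\hat R_a \le \hat R_b) \le 2 \exp\left(- (j - i)^2 m^2 s / 72\right)$. -/
open MeasureTheory ProbabilityTheory

lemma chernoff_upper_tail {Ω : Type*} [MeasurableSpace Ω] (P : Measure Ω)
    [IsProbabilityMeasure P] (n : ℕ) (Z : Fin n → Ω → ℝ) (σ c : ℝ)
    (hσ : 0 < σ) (hc : 0 < c)
    (hmeas : ∀ k, Measurable (Z k))
    (hindep : iIndepFun Z P)
    (hint : ∀ (t : ℝ) k, Integrable (fun ω => Real.exp (t * Z k ω)) P)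
    (hmgf : ∀ (t : ℝ) k, ∫ ω, Real.exp (t * Z k ω) ∂P ≤ Real.exp (t ^ 2 * σ ^ 2 / 2)) :
    P {ω | (n : ℝ) * c ≤ ∑ k, Z k ω} ≤
      ENNReal.ofReal (Real.exp (-(n : ℝ) * c ^ 2 / (2 * σ ^ 2))) := by
  set t : ℝ := c / σ ^ 2 with ht_def
  have ht : 0 ≤ t := div_nonneg hc.le (by positivity)
  have hintS : Integrable (fun ω => Real.exp (t * (∑ k, Z k) ω)) P :=
    hindep.integrable_exp_mul_sum hmeas (fun k _ => hint t k)
  have hch := measure_ge_le_exp_mul_mgf (μ := P) (X := ∑ k, Z k) ((n : ℝ) * c) ht hintS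
  have hset : {ω | (n : ℝ) * c ≤ ∑ k, Z k ω} = {ω | (n : ℝ) * c ≤ (∑ k, Z k) ω} := by
    simp [Finset.sum_apply]
  have hmgfS : mgf (∑ k, Z k) P t ≤ Real.exp (t ^ 2 * σ ^ 2 / 2) ^ n := by
    rw [hindep.mgf_sum hmeas Finset.univ]
    calc ∏ k, mgf (Z k) P t ≤ ∏ _k : Fin n, Real.exp (t ^ 2 * σ ^ 2 / 2) :=
          Finset.prod_le_prod (fun k _ => mgf_nonneg) (fun k _ => hmgf t k)
      _ = Real.exp (t ^ 2 * σ ^ 2 / 2) ^ n := by simp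
  have hbound : (P {ω | (n : ℝ) * c ≤ ∑ k, Z k ω}).toReal ≤
      Real.exp (-(n : ℝ) * c ^ 2 / (2 * σ ^ 2)) := by
    rw [hset]
    refine hch.trans ?_
    calc Real.exp (-t * ((n : ℝ) * c)) * mgf (∑ k, Z k) P t
        ≤ Real.exp (-t * ((n : ℝ) * c)) * Real.exp (t ^ 2 * σ ^ 2 / 2) ^ n := by
          exact mul_le_mul_of_nonneg_left hmgfS (Real.exp_pos _).le
      _ = Real.exp (-t * ((n : ℝ) * c) + (n : ℝ) * (t ^ 2 * σ ^ 2 / 2)) := by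
          rw [← Real.exp_nat_mul, ← Real.exp_add]
      _ = Real.exp (-(n : ℝ) * c ^ 2 / (2 * σ ^ 2)) := by
          congr 1
          field_simp [ht_def]
          rw [ht_def]; field_simp; ring
  rw [← ENNReal.ofReal_toReal (measure_ne_top P _)]
  exact ENNReal.ofReal_le_ofReal hbound

/-- Per-step misidentification bound from the proof of Lemma 2: if the minimizer `γ⋆`
lies in the rightmost third of `[i, j]` (i.e. `γ⋆ ≥ b` where `a = (2i+j)/3`,
`b = (i+2j)/3`) and the gap condition `R_a - R_b ≥ m max{σ_a, σ_b} (b - a)` holds, then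
for empirical means `R̂_a`, `R̂_b` of `s` i.i.d. samples with means `R_a`, `R_b` that are
`σ_a²`- and `σ_b²`-sub-Gaussian about their means respectively (on a common probability
space, with no independence assumed between the two groups),
`Pr(R̂_a ≤ R̂_b) ≤ 2 exp(-(j-i)² m² s / 72)`. -/
theorem per_step_misidentification_bound
    {Ω : Type*} [MeasurableSpace Ω] (P : Measure Ω) [IsProbabilityMeasure P]
    (m : ℝ) (hm : 0 < m) (s : ℕ) (hs : 1 ≤ s)
    (i j : ℝ) (hij : i < j)
    (a b : ℝ) (ha : a = (2 * i + j) / 3) (hb : b = (i + 2 * j) / 3)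
    (γstar : ℝ) (hγstar : b ≤ γstar)
    (Ra Rb σa σb : ℝ) (hσa : 0 < σa) (hσb : 0 < σb)
    (hgap : Ra - Rb ≥ m * max σa σb * (b - a))
    (X Y : Fin s → Ω → ℝ)
    (hXmeas : ∀ k, Measurable (X k)) (hYmeas : ∀ k, Measurable (Y k))
    (hXindep : iIndepFun X P)
    (hYindep : iIndepFun Y P)
    (hXid : ∀ k k', IdentDistrib (X k) (X k') P P)
    (hYid : ∀ k k', IdentDistrib (Y k) (Y k') P P)
    (hXmean : ∀ k, ∫ ω, X k ω ∂P = Ra) (hYmean : ∀ k, ∫ ω, Y k ω ∂P = Rb)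
    (hXsub : ∀ k, IsSubGaussian P (X k) Ra σa)
    (hYsub : ∀ k, IsSubGaussian P (Y k) Rb σb) :
    P {ω | (s : ℝ)⁻¹ * ∑ k, X k ω ≤ (s : ℝ)⁻¹ * ∑ k, Y k ω} ≤
      ENNReal.ofReal (2 * Real.exp (-(j - i) ^ 2 * m ^ 2 * s / 72)) := by
  set σm : ℝ := max σa σb with hσm_def
  set Δ : ℝ := Ra - Rb with hΔ_def
  have hji : 0 < j - i := sub_pos.mpr hij
  have hba : b - a = (j - i) / 3 := by rw [ha, hb]; ring
  have hσam : σa ≤ σm := le_max_left _ _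
  have hσbm : σb ≤ σm := le_max_right _ _
  have hσm : 0 < σm := lt_of_lt_of_le hσa hσam
  have hΔge : m * σm * ((j - i) / 3) ≤ Δ := by rw [← hba]; exact hgap
  have hΔpos : 0 < Δ := lt_of_lt_of_le (by positivity) hΔge
  have hc : 0 < Δ / 2 := by positivity
  have hspos : (0 : ℝ) < s := by exact_mod_cast Nat.lt_of_lt_of_le Nat.zero_lt_one hs
  -- the two tail events
  set ZX : Fin s → Ω → ℝ := fun k ω => Ra - X k ω with hZX_def
  set ZY : Fin s → Ω → ℝ := fun k ω => Y k ω - Rb with hZY_def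
  have hZXindep : iIndepFun ZX P :=
    hXindep.comp (fun _ x => Ra - x) (fun _ => measurable_const.sub measurable_id)
  have hZYindep : iIndepFun ZY P :=
    hYindep.comp (fun _ x => x - Rb) (fun _ => measurable_id.sub measurable_const)
  have hZXmeas : ∀ k, Measurable (ZX k) := fun k => measurable_const.sub (hXmeas k)
  have hZYmeas : ∀ k, Measurable (ZY k) := fun k => (hYmeas k).sub measurable_const
  have hZXint : ∀ (t : ℝ) k, Integrable (fun ω => Real.exp (t * ZX k ω)) P := by
    intro t k
    have h := (hXsub k (-t)).1
    refine h.congr (Filter.Eventually.of_forall fun ω => ?_)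
    simp only [hZX_def]
    congr 1
    ring
  have hZYint : ∀ (t : ℝ) k, Integrable (fun ω => Real.exp (t * ZY k ω)) P := by
    intro t k
    exact (hYsub k t).1
  have hZXmgf : ∀ (t : ℝ) k,
      ∫ ω, Real.exp (t * ZX k ω) ∂P ≤ Real.exp (t ^ 2 * σa ^ 2 / 2) := by
    intro t k
    have h := (hXsub k (-t)).2
    have heq : (fun ω => Real.exp (t * ZX k ω)) =
        fun ω => Real.exp ((-t) * (X k ω - Ra)) := by
      funext ω; simp only [hZX_def]; congr 1; ring
    rw [heq]
    simpa using h
  have hZYmgf : ∀ (t : ℝ) k,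
      ∫ ω, Real.exp (t * ZY k ω) ∂P ≤ Real.exp (t ^ 2 * σb ^ 2 / 2) := by
    intro t k
    exact (hYsub k t).2
  have hA := chernoff_upper_tail P s ZX σa (Δ / 2) hσa hc hZXmeas hZXindep hZXint hZXmgf
  have hB := chernoff_upper_tail P s ZY σb (Δ / 2) hσb hc hZYmeas hZYindep hZYint hZYmgf
  -- event inclusion
  have hsub : {ω | (s : ℝ)⁻¹ * ∑ k, X k ω ≤ (s : ℝ)⁻¹ * ∑ k, Y k ω} ⊆
      {ω | (s : ℝ) * (Δ / 2) ≤ ∑ k, ZX k ω} ∪ {ω | (s : ℝ) * (Δ / 2) ≤ ∑ k, ZY k ω} := by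
    intro ω hω
    simp only [Set.mem_setOf_eq] at hω
    have hxy : ∑ k, X k ω ≤ ∑ k, Y k ω :=
      (mul_le_mul_iff_right₀ (inv_pos.mpr hspos)).mp hω
    have hsx : ∑ k, ZX k ω = (s : ℝ) * Ra - ∑ k, X k ω := by
      simp only [hZX_def]
      rw [Finset.sum_sub_distrib, Finset.sum_const, Finset.card_univ, Fintype.card_fin,
        nsmul_eq_mul]
    have hsy : ∑ k, ZY k ω = ∑ k, Y k ω - (s : ℝ) * Rb := by
      simp only [hZY_def]
      rw [Finset.sum_sub_distrib, Finset.sum_const, Finset.card_univ, Fintype.card_fin,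
        nsmul_eq_mul]
    by_cases h1 : (s : ℝ) * (Δ / 2) ≤ ∑ k, ZX k ω
    · exact Or.inl h1
    · refine Or.inr ?_
      simp only [Set.mem_setOf_eq]
      push_neg at h1
      rw [hsx] at h1
      rw [hsy]
      have hΔeq : (s : ℝ) * Δ = (s : ℝ) * Ra - (s : ℝ) * Rb := by
        simp only [hΔ_def]; ring
      nlinarith [h1, hxy, hΔeq]
  -- exponent comparison
  have key : ∀ σ : ℝ, 0 < σ → σ ≤ σm →
      Real.exp (-(s : ℝ) * (Δ / 2) ^ 2 / (2 * σ ^ 2)) ≤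
        Real.exp (-(j - i) ^ 2 * m ^ 2 * s / 72) := by
    intro σ hσ hσle
    apply Real.exp_le_exp.mpr
    have hΔσ : m * σ * ((j - i) / 3) ≤ Δ := by
      refine le_trans ?_ hΔge
      have : m * σ * ((j - i) / 3) ≤ m * σm * ((j - i) / 3) := by
        apply mul_le_mul_of_nonneg_right _ (by positivity)
        exact mul_le_mul_of_nonneg_left hσle hm.le
      exact this
    have hx : (0 : ℝ) ≤ m * σ * ((j - i) / 3) := by positivity
    have h2 : (j - i) ^ 2 * m ^ 2 / 72 ≤ (Δ / 2) ^ 2 / (2 * σ ^ 2) := by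
      rw [div_le_div_iff₀ (by norm_num) (by positivity)]
      nlinarith [hΔσ, hx, mul_nonneg hx hΔpos.le, sq_nonneg (Δ - m * σ * ((j - i) / 3)),
        sq_nonneg σ, hσ, hm, hji]
    have h3 := mul_le_mul_of_nonneg_left h2 (Nat.cast_nonneg s : (0:ℝ) ≤ s)
    have e1 : -(s : ℝ) * (Δ / 2) ^ 2 / (2 * σ ^ 2) =
        -((s : ℝ) * ((Δ / 2) ^ 2 / (2 * σ ^ 2))) := by ring
    have e2 : -(j - i) ^ 2 * m ^ 2 * (s : ℝ) / 72 =
        -((s : ℝ) * ((j - i) ^ 2 * m ^ 2 / 72)) := by ring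
    rw [e1, e2]
    exact neg_le_neg h3
  have hE : (0 : ℝ) ≤ Real.exp (-(j - i) ^ 2 * m ^ 2 * s / 72) := (Real.exp_pos _).le
  calc P {ω | (s : ℝ)⁻¹ * ∑ k, X k ω ≤ (s : ℝ)⁻¹ * ∑ k, Y k ω}
      ≤ P ({ω | (s : ℝ) * (Δ / 2) ≤ ∑ k, ZX k ω} ∪
          {ω | (s : ℝ) * (Δ / 2) ≤ ∑ k, ZY k ω}) := measure_mono hsub
    _ ≤ P {ω | (s : ℝ) * (Δ / 2) ≤ ∑ k, ZX k ω} +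
          P {ω | (s : ℝ) * (Δ / 2) ≤ ∑ k, ZY k ω} := measure_union_le _ _
    _ ≤ ENNReal.ofReal (Real.exp (-(j - i) ^ 2 * m ^ 2 * s / 72)) +
          ENNReal.ofReal (Real.exp (-(j - i) ^ 2 * m ^ 2 * s / 72)) := by
        gcongr
        · exact hA.trans (ENNReal.ofReal_le_ofReal (key σa hσa hσam))
        · exact hB.trans (ENNReal.ofReal_le_ofReal (key σb hσb hσbm))
    _ = ENNReal.ofReal (2 * Real.exp (-(j - i) ^ 2 * m ^ 2 * s / 72)) := by
        rw [← ENNReal.ofReal_add hE hE, ← two_mul]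
end
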